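/- arXiv:2405.04168 — 2 statements merged into one kernel-verified Lean document; each statement's English description precedes it below -/
import Mathlib

section
/- With E1 defined as: E1 a h 0 q = 0; E1 a h (n+1) q = a if a > h; E1 a h (n+1) q = max 0 (q * E1 (a+1) h n q + (1-q) * E1 a (h+1) n q - q) if a ≤ h; for all n and all q ∈ [0,1], E1 0 0 n q = 0. -/
noncomputable def E1 : ℕ → ℕ → ℕ → ℝ → ℝ
  | _, _, 0, _ => 0
  | a, h, n + 1, q =>
    if a > h then (a : ℝ)
    else max 0 (q * E1 (a + 1) h n q + (1 - q) * E1 a (h + 1) n q - q)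

theorem E1_zero_zero (n : ℕ) (q : ℝ) (hq0 : 0 ≤ q) (hq1 : q ≤ 1) :
    E1 0 0 n q = 0 := by
  have key : ∀ m a h : ℕ, E1 a h m q ≤ (a : ℝ) := by
    intro m
    induction m with
    | zero => intro a h; simp [E1]
    | succ n ih =>
      intro a h
      rw [E1]
      split
      · exact le_refl _
      · apply max_le
        · exact Nat.cast_nonneg a
        · have h1 : q * E1 (a + 1) h n q ≤ q * ((a : ℝ) + 1) := by
            have := ih (a + 1) h
            push_cast at this ⊢
            nlinarith
          have h2 : (1 - q) * E1 a (h + 1) n q ≤ (1 - q) * (a : ℝ) := by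
            have := ih a (h + 1)
            nlinarith
          nlinarith
  cases n with
  | zero => simp [E1]
  | succ n =>
    rw [E1]
    simp only [gt_iff_lt, lt_irrefl, if_false, Nat.cast_zero]
    have h0 : q * E1 1 0 n q + (1 - q) * E1 0 1 n q - q ≤ 0 := by
      have h1 := key n 1 0
      have h2 := key n 0 1
      have h3 : 0 ≤ E1 0 1 n q := by
        cases n with
        | zero => simp [E1]
        | succ m => rw [E1]; simp
      push_cast at h1 h2
      nlinarith
    simp [max_eq_left h0]
end

section
/- With E1 defined as for the first coin-toss game and fixed n, E1 a h n q is monotone nondecreasing in a and nonincreasing in h: for q ∈ [0,1], E1 a h n q ≤ E1 (a+1) h n q and E1 a (h+1) n q ≤ E1 a h n q. -/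
lemma E1_le (q : ℝ) (hq0 : 0 ≤ q) (hq1 : q ≤ 1) :
    ∀ n a h : ℕ, a ≤ h + 1 → E1 a h n q ≤ (a : ℝ) := by
  intro n
  induction n with
  | zero => intro a h _; simp [E1]
  | succ n ih =>
    intro a h hah
    rw [E1]
    by_cases hc : a > h
    · simp [hc]
    · simp only [hc, if_false]
      push_neg at hc
      have h1 := ih (a + 1) h (by omega)
      have h2 := ih a (h + 1) (by omega)
      refine max_le (by positivity) ?_
      push_cast at h1 h2 ⊢
      nlinarith [mul_le_mul_of_nonneg_left h1 hq0,
        mul_le_mul_of_nonneg_left h2 (by linarith : (0:ℝ) ≤ 1 - q)]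

theorem E1_monotone_chips (a h n : ℕ) (q : ℝ) (hq0 : 0 ≤ q) (hq1 : q ≤ 1) :
    E1 a h n q ≤ E1 (a + 1) h n q ∧ E1 a (h + 1) n q ≤ E1 a h n q := by
  induction n generalizing a h with
  | zero => simp [E1]
  | succ n ih =>
    constructor
    · by_cases hc : a > h
      · have hc2 : a + 1 > h := by omega
        rw [E1, E1, if_pos hc, if_pos hc2]
        push_cast; linarith
      · push_neg at hc
        by_cases hc2 : a + 1 > h
        · -- a = h
          rw [E1, E1, if_neg (by omega), if_pos hc2]
          have h1 := E1_le q hq0 hq1 n (a + 1) h (by omega)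
          have h2 := E1_le q hq0 hq1 n a (h + 1) (by omega)
          refine max_le (by positivity) ?_
          push_cast at h1 h2 ⊢
          nlinarith [mul_le_mul_of_nonneg_left h1 hq0,
            mul_le_mul_of_nonneg_left h2 (by linarith : (0:ℝ) ≤ 1 - q)]
        · rw [E1, E1, if_neg (by omega), if_neg (by omega)]
          have i1 := (ih (a + 1) h).1
          have i2 := (ih a (h + 1)).1
          refine max_le_max le_rfl ?_
          nlinarith [mul_le_mul_of_nonneg_left i1 hq0,
            mul_le_mul_of_nonneg_left i2 (by linarith : (0:ℝ) ≤ 1 - q)]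
    · by_cases hc : a > h + 1
      · rw [E1, E1, if_pos hc, if_pos (by omega)]
      · by_cases hc2 : a > h
        · -- a = h + 1
          rw [E1, E1, if_neg (by omega), if_pos hc2]
          have h1 := E1_le q hq0 hq1 n (a + 1) (h + 1) (by omega)
          have h2 := E1_le q hq0 hq1 n a (h + 1 + 1) (by omega)
          refine max_le (by positivity) ?_
          push_cast at h1 h2 ⊢
          nlinarith [mul_le_mul_of_nonneg_left h1 hq0,
            mul_le_mul_of_nonneg_left h2 (by linarith : (0:ℝ) ≤ 1 - q)]
        · rw [E1, E1, if_neg (by omega), if_neg (by omega)]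
          have i1 := (ih (a + 1) h).2
          have i2 := (ih a (h + 1)).2
          refine max_le_max le_rfl ?_
          nlinarith [mul_le_mul_of_nonneg_left i1 hq0,
            mul_le_mul_of_nonneg_left i2 (by linarith : (0:ℝ) ≤ 1 - q)]
end
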